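/- arXiv:cs/0410030 — 2 statements merged into one kernel-verified Lean document; each statement's English description precedes it below -/
import Mathlib

section
/- Every function f : Bool^n → Bool that is expressible as a composition tree in which each internal node applies a function from the set {constant false, constant true, identity, negation} ∘ projection-structure where each input variable is used linearly (exactly once in the whole expression), and each binary node applies one of the six functions f₁,…,f₆ of Table 2, is either constant, a projection, or a negated projection. -/
/-!
Each function of Table 2 ignores one of its arguments and applies a unary Boolean
function to the other. Since the only unary Boolean functions are the constants, the
identity and negation, and since renaming variables maps projections to projections,
the class of constants, projections and negated projections is closed under both kinds
of node.
-/

/-- The six binary Boolean functions of Table 2: two constants, the two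
projections, and their negations. -/
def IsTableTwo (g : Bool → Bool → Bool) : Prop :=
  g = (fun _ _ => false) ∨ g = (fun _ _ => true) ∨
  g = (fun _ b => b) ∨ g = (fun _ b => !b) ∨
  g = (fun a _ => a) ∨ g = (fun a _ => !a)

/-- Linear composition trees over `n` variables (each variable used exactly
once), with unary nodes from {const false, const true, id, not} and binary
nodes from the six functions of Table 2. -/
inductive LinExpr : ℕ → Type
  | var : LinExpr 1
  | unary {n : ℕ} (u : Bool → Bool)
      (hu : u = (fun _ => false) ∨ u = (fun _ => true) ∨ u = id ∨ u = not)
      (e : LinExpr n) : LinExpr n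
  | binary {m k : ℕ} (g : Bool → Bool → Bool) (hg : IsTableTwo g)
      (l : LinExpr m) (r : LinExpr k) : LinExpr (m + k)

/-- Evaluation of a linear composition tree. -/
def LinExpr.eval : {n : ℕ} → LinExpr n → (Fin n → Bool) → Bool
  | _, .var, v => v 0
  | _, .unary u _ e, v => u (e.eval v)
  | _, .binary (m := m) (k := k) g _ l r, v =>
      g (l.eval fun i => v (Fin.castAdd k i)) (r.eval fun i => v (Fin.natAdd m i))

theorem Bool.eq_const_or_eq_id_or_eq_not (u : Bool → Bool) :
    (∃ c, u = fun _ => c) ∨ u = id ∨ u = not := by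
  cases h₀ : u false <;> cases h₁ : u true
  · exact Or.inl ⟨false, funext fun b => by cases b <;> assumption⟩
  · exact Or.inr (Or.inl (funext fun b => by cases b <;> assumption))
  · exact Or.inr (Or.inr (funext fun b => by cases b <;> assumption))
  · exact Or.inl ⟨true, funext fun b => by cases b <;> assumption⟩

theorem IsTableTwo.exists_eq_comp_fst_or_snd {g : Bool → Bool → Bool} (hg : IsTableTwo g) :
    ∃ u : Bool → Bool, (g = fun a _ => u a) ∨ (g = fun _ b => u b) := by
  rcases hg with rfl | rfl | rfl | rfl | rfl | rfl
  · exact ⟨fun _ => false, Or.inl rfl⟩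
  · exact ⟨fun _ => true, Or.inl rfl⟩
  · exact ⟨id, Or.inr rfl⟩
  · exact ⟨not, Or.inr rfl⟩
  · exact ⟨id, Or.inl rfl⟩
  · exact ⟨not, Or.inl rfl⟩

/-- Unlike the usual notion of a literal, constants are included. -/
def IsLiteral {ι : Type*} (f : (ι → Bool) → Bool) : Prop :=
  (∃ c : Bool, f = fun _ => c) ∨ (∃ i, f = fun v => v i) ∨ (∃ i, f = fun v => !(v i))

namespace IsLiteral

variable {ι κ : Type*} {f : (ι → Bool) → Bool}

theorem not (hf : IsLiteral f) : IsLiteral fun v => !(f v) := by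
  rcases hf with ⟨c, rfl⟩ | ⟨i, rfl⟩ | ⟨i, rfl⟩
  · exact Or.inl ⟨!c, rfl⟩
  · exact Or.inr (Or.inr ⟨i, rfl⟩)
  · exact Or.inr (Or.inl ⟨i, funext fun v => Bool.not_not (v i)⟩)

theorem comp (u : Bool → Bool) (hf : IsLiteral f) : IsLiteral (u ∘ f) := by
  rcases Bool.eq_const_or_eq_id_or_eq_not u with ⟨c, rfl⟩ | rfl | rfl
  · exact Or.inl ⟨c, rfl⟩
  · exact hf
  · exact hf.not

theorem precomp (σ : ι → κ) (hf : IsLiteral f) : IsLiteral fun v : κ → Bool => f (v ∘ σ) := by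
  rcases hf with ⟨c, rfl⟩ | ⟨i, rfl⟩ | ⟨i, rfl⟩
  · exact Or.inl ⟨c, rfl⟩
  · exact Or.inr (Or.inl ⟨σ i, rfl⟩)
  · exact Or.inr (Or.inr ⟨σ i, rfl⟩)

end IsLiteral

theorem LinExpr.isLiteral_eval {n : ℕ} (e : LinExpr n) : IsLiteral e.eval := by
  induction e with
  | var => exact Or.inr (Or.inl ⟨0, rfl⟩)
  | unary u _ e ih => exact ih.comp u
  | @binary m k g hg l r ihl ihr =>
    obtain ⟨u, rfl | rfl⟩ := hg.exists_eq_comp_fst_or_snd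
    · exact (ihl.precomp (Fin.castAdd k)).comp u
    · exact (ihr.precomp (Fin.natAdd m)).comp u

theorem stmt_8 {n : ℕ} (e : LinExpr n) :
    (∃ c : Bool, e.eval = fun _ => c) ∨
    (∃ i : Fin n, e.eval = fun v => v i) ∨
    (∃ i : Fin n, e.eval = fun v => !(v i)) :=
  e.isLiteral_eval
end

section
/- Let F₁ and F₂ be two rooted trees with internal nodes labeled by 'function symbols' G₁,…,G_m (each occurring exactly once in each tree, with fixed arities) and leaves labeled by variables x₁,…,x_n (each occurring exactly once in each tree). If F₁ ≠ F₂ as labeled trees, then there exist an assignment of each G_i to a Boolean function that is either a constant or a projection or a negated projection (of matching arity), and Boolean values for x₁,…,x_n, such that the evaluations of F₁ and F₂ differ. -/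
/-- Rooted trees with internal nodes labeled by function symbols and leaves
labeled by variables. -/
inductive FTree : Type
  | leaf (j : ℕ) : FTree
  | node (i : ℕ) (children : List FTree) : FTree

/-- Evaluation of a tree given Boolean functions for the symbols and Boolean
values for the variables. -/
def FTree.eval (G : ℕ → List Bool → Bool) (x : ℕ → Bool) : FTree → Bool
  | .leaf j => x j
  | .node i cs => G i (cs.attach.map fun c => c.1.eval G x)
decreasing_by
  have := List.sizeOf_lt_of_mem c.2
  simp_wf
  omega

/-- The list of variable labels of the leaves, in left-to-right order. -/
def FTree.vars : FTree → List ℕ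
  | .leaf j => [j]
  | .node _ cs => (cs.attach.map fun c => c.1.vars).flatten
decreasing_by
  have := List.sizeOf_lt_of_mem c.2
  simp_wf
  omega

/-- The list of function-symbol labels of the internal nodes. -/
def FTree.syms : FTree → List ℕ
  | .leaf _ => []
  | .node i cs => i :: (cs.attach.map fun c => c.1.syms).flatten
decreasing_by
  have := List.sizeOf_lt_of_mem c.2
  simp_wf
  omega

/-- Each node labeled `i` has exactly `arity i` children. -/
inductive FTree.WF (arity : ℕ → ℕ) : FTree → Prop
  | leaf (j : ℕ) : FTree.WF arity (.leaf j)
  | node (i : ℕ) (cs : List FTree) :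
      cs.length = arity i → (∀ c ∈ cs, FTree.WF arity c) →
      FTree.WF arity (.node i cs)

/-- A `k`-ary Boolean function (on length-`k` lists) that is a constant, a
projection, or a negated projection. -/
def SimpleFn (f : List Bool → Bool) (k : ℕ) : Prop :=
  (∃ c, ∀ l : List Bool, l.length = k → f l = c) ∨
  (∃ j, j < k ∧
    ((∀ l : List Bool, l.length = k → f l = l.getD j false) ∨
     (∀ l : List Bool, l.length = k → f l = !(l.getD j false))))


lemma eval_node (G x) (i : ℕ) (cs : List FTree) :
    (FTree.node i cs).eval G x = G i (cs.map fun c => c.eval G x) := by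
  rw [FTree.eval]; congr 1; simp

lemma syms_node (i : ℕ) (cs : List FTree) :
    (FTree.node i cs).syms = i :: (cs.map FTree.syms).flatten := by
  rw [FTree.syms]; congr 1; simp

lemma eval_congr (G G' : ℕ → List Bool → Bool) (x : ℕ → Bool) :
    ∀ t : FTree, (∀ i ∈ t.syms, G i = G' i) → t.eval G x = t.eval G' x
  | .leaf j, _ => by simp [FTree.eval]
  | .node i cs, h => by
    rw [eval_node, eval_node, h i (by simp [syms_node])]
    congr 1
    refine List.map_congr_left fun c hc => ?_
    exact eval_congr G G' x c fun i' hi' => h i'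
      (by simp only [syms_node, List.mem_cons, List.mem_flatten]
          exact Or.inr ⟨c.syms, List.mem_map_of_mem hc, hi'⟩)
termination_by t => sizeOf t
decreasing_by
  have := List.sizeOf_lt_of_mem hc
  simp_wf
  omega

lemma sep (arity : ℕ → ℕ) :
    ∀ F₁ F₂ : FTree, F₁.WF arity → F₂.WF arity →
    F₁.syms.Nodup → F₂.syms.Nodup → F₁ ≠ F₂ →
    ∃ (G : ℕ → List Bool → Bool) (x : ℕ → Bool),
      (∀ i, SimpleFn (G i) (arity i)) ∧ F₁.eval G x ≠ F₂.eval G x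
  | .leaf j₁, .leaf j₂, _, _, _, _, hne => by
    refine ⟨fun _ _ => false, fun j => decide (j = j₁), fun i => Or.inl ⟨false, fun _ _ => rfl⟩, ?_⟩
    have : j₁ ≠ j₂ := fun h => hne (by rw [h])
    simp [FTree.eval, this, Ne.symm this]
  | .leaf j, .node i cs, _, _, _, _, _ => by
    refine ⟨fun _ _ => false, fun _ => true, fun i => Or.inl ⟨false, fun _ _ => rfl⟩, ?_⟩
    simp [FTree.eval, eval_node]
  | .node i cs, .leaf j, _, _, _, _, _ => by
    refine ⟨fun _ _ => false, fun _ => true, fun i => Or.inl ⟨false, fun _ _ => rfl⟩, ?_⟩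
    simp [FTree.eval, eval_node]
  | .node i₁ cs₁, .node i₂ cs₂, hwf₁, hwf₂, hn₁, hn₂, hne => by
    by_cases hi : i₁ = i₂
    · subst hi
      have hcs : cs₁ ≠ cs₂ := fun h => hne (by rw [h])
      cases hwf₁ with | node _ _ hlen₁ hwfc₁ =>
      cases hwf₂ with | node _ _ hlen₂ hwfc₂ =>
      have hlen : cs₁.length = cs₂.length := by omega
      have hk : ∃ k, ∃ h : k < cs₁.length, cs₁[k] ≠ cs₂[k]'(hlen ▸ h) := by
        by_contra h
        push_neg at h
        exact hcs (List.ext_getElem hlen fun k h1 h2 => h k h1)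
      obtain ⟨k, hklt, hkne⟩ := hk
      have hmem₁ : cs₁[k] ∈ cs₁ := List.getElem_mem _
      have hmem₂ : cs₂[k]'(hlen ▸ hklt) ∈ cs₂ := List.getElem_mem _
      have hnsub : ∀ (cs : List FTree), (FTree.node i₁ cs).syms.Nodup →
          ∀ c ∈ cs, c.syms.Nodup ∧ i₁ ∉ c.syms := by
        intro cs hn c hc
        rw [syms_node, List.nodup_cons] at hn
        constructor
        · exact (List.nodup_flatten.1 hn.2).1 _ (List.mem_map_of_mem hc)
        · exact fun hi' => hn.1 (List.mem_flatten.2 ⟨c.syms, List.mem_map_of_mem hc, hi'⟩)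
      obtain ⟨G, x, hG, hev⟩ := sep arity cs₁[k] (cs₂[k]'(hlen ▸ hklt))
        (hwfc₁ _ hmem₁) (hwfc₂ _ hmem₂)
        ((hnsub cs₁ hn₁ _ hmem₁).1) ((hnsub cs₂ hn₂ _ hmem₂).1) hkne
      refine ⟨Function.update G i₁ (fun l => l.getD k false), x, ?_, ?_⟩
      · intro i
        by_cases h : i = i₁
        · subst h
          simp only [Function.update_self]
          exact Or.inr ⟨k, by omega, Or.inl fun l _ => rfl⟩
        · simpa [Function.update_of_ne h] using hG i
      · have key : ∀ (cs : List FTree) (c : FTree), c ∈ cs → (hl : k < cs.length) →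
            (FTree.node i₁ cs).syms.Nodup →
            (FTree.node i₁ cs).eval (Function.update G i₁ (fun l => l.getD k false)) x
              = (cs[k]'hl).eval G x := by
          intro cs c hc hl hn
          rw [eval_node, Function.update_self]
          rw [List.getD_eq_getElem _ _ (by simpa using hl)]
          rw [List.getElem_map]
          exact eval_congr _ _ x _ fun i' hi' => by
            rw [Function.update_of_ne]
            intro h; subst h
            exact (hnsub cs hn _ (List.getElem_mem _)).2 hi'
        rw [key cs₁ _ hmem₁ hklt hn₁, key cs₂ _ hmem₂ (hlen ▸ hklt) hn₂]
        exact hev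
    · refine ⟨fun i _ => decide (i = i₁), fun _ => true,
        fun i => Or.inl ⟨decide (i = i₁), fun _ _ => rfl⟩, ?_⟩
      simp [eval_node, hi, Ne.symm hi]
termination_by F₁ _ => sizeOf F₁
decreasing_by
  have := List.sizeOf_lt_of_mem hmem₁
  simp_wf
  omega

/-- Two distinct linear composition trees (each function symbol `G₀,…,G_{m-1}`
and each variable `x₀,…,x_{n-1}` occurring exactly once in each tree, with
matching arities) can be separated by assigning to each symbol a constant,
projection, or negated projection, and Boolean values to the variables. -/
theorem stmt_18 (m n : ℕ) (arity : ℕ → ℕ) (F₁ F₂ : FTree)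
    (hwf₁ : F₁.WF arity) (hwf₂ : F₂.WF arity)
    (hsym₁ : F₁.syms.Perm (List.range m)) (hsym₂ : F₂.syms.Perm (List.range m))
    (hvar₁ : F₁.vars.Perm (List.range n)) (hvar₂ : F₂.vars.Perm (List.range n))
    (hne : F₁ ≠ F₂) :
    ∃ (G : ℕ → List Bool → Bool) (x : ℕ → Bool),
      (∀ i < m, SimpleFn (G i) (arity i)) ∧
      F₁.eval G x ≠ F₂.eval G x := by
  have hn₁ : F₁.syms.Nodup := hsym₁.nodup_iff.mpr List.nodup_range
  have hn₂ : F₂.syms.Nodup := hsym₂.nodup_iff.mpr List.nodup_range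
  obtain ⟨G, x, hG, hev⟩ := sep arity F₁ F₂ hwf₁ hwf₂ hn₁ hn₂ hne
  exact ⟨G, x, fun i _ => hG i, hev⟩
end
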